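/- arXiv:1704.08184 — 6 statements merged into one kernel-verified Lean document; each statement's English description precedes it below -/
import Mathlib

section
/- Let g be holomorphic on the open unit disk D with g(0) = 1, and suppose that |g(z) − z·g'(z) − 1| < 1 for all z ∈ D. Then the map z ↦ z/g(z) is injective on the set {z ∈ D : g(z) ≠ 0}. (This is Theorem 1a: a function f meromorphic in D with f(0) = 0, f'(0) = 1 satisfying |z/f(z) − z(z/f(z))' − 1| < 1 on D, written as f = z/g, is univalent in D.) -/
/-!
Put `ψ z = g z - z g'(z) - 1`. Then `ψ(0) = ψ'(0) = 0` and `|ψ| < 1`, so the Schwarz lemma for a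
double zero gives `|ψ z| ≤ |z|²`. The slope `H z = (g z - 1) / z` satisfies `H' = -ψ / z²`, hence
`|H'| ≤ 1` and `H` is `1`-Lipschitz on the disk. Since `g z / z = H z + 1 / z`, an equality
`z₁ / g z₁ = z₂ / g z₂` with `z₁ ≠ z₂` forces `H z₁ - H z₂ = (z₁ - z₂) / (z₁ z₂)`, whose modulus
exceeds `|z₁ - z₂|`.
-/

open Complex Metric Set Filter Topology

theorem dist_le_mul_div_sq_of_mapsTo_ball_of_hasDerivAt_zero {F : Type*} [NormedAddCommGroup F]
    [NormedSpace ℂ F] {f : ℂ → F} {c z : ℂ} {R₁ R₂ : ℝ}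
    (hd : DifferentiableOn ℂ f (ball c R₁)) (h_maps : MapsTo f (ball c R₁) (closedBall (f c) R₂))
    (hf' : HasDerivAt f 0 c) (hz : z ∈ ball c R₁) :
    dist (f z) (f c) ≤ R₂ * (dist z c / R₁) ^ 2 := by
  refine dist_le_mul_div_pow_of_mapsTo_ball_of_isLittleO (n := 1) hd h_maps ?_ hz
  simpa [← norm_sub_rev] using hf'.isLittleO.norm_right

theorem hasDerivAt_dslope_of_ne {𝕜 E : Type*} [NontriviallyNormedField 𝕜] [NormedAddCommGroup E]
    [NormedSpace 𝕜 E] {f : 𝕜 → E} {a b : 𝕜} (hf : DifferentiableAt 𝕜 f b) (hb : b ≠ a) :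
    HasDerivAt (dslope f a) ((b - a)⁻¹ • (deriv f b - dslope f a b)) b := by
  have hba : b - a ≠ 0 := sub_ne_zero.2 hb
  have h := (((hasDerivAt_id b).sub_const a).inv hba).smul (hf.hasDerivAt.sub_const (f a))
  refine (h.congr_of_eventuallyEq ?_).congr_deriv ?_
  · filter_upwards [dslope_eventuallyEq_slope_of_ne f hb] with w hw
    rw [hw, slope_def_module]
    rfl
  · simp only [Pi.inv_apply, id, dslope_of_ne f hb, slope_def_module, smul_sub, smul_smul,
      div_eq_mul_inv, ← inv_pow]
    module

theorem hasDerivAt_sub_mul_deriv {𝕜 : Type*} [NontriviallyNormedField 𝕜] {g : 𝕜 → 𝕜} {z : 𝕜}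
    (hg : DifferentiableAt 𝕜 g z) (hg' : DifferentiableAt 𝕜 (deriv g) z) :
    HasDerivAt (fun w => g w - w * deriv g w) (-(z * deriv (deriv g) z)) z :=
  (hg.hasDerivAt.fun_sub ((hasDerivAt_id' z).fun_mul hg'.hasDerivAt)).congr_deriv (by ring)

theorem norm_sub_mul_deriv_sub_le_sq {g : ℂ → ℂ} {R M : ℝ}
    (hg : DifferentiableOn ℂ g (ball (0 : ℂ) R))
    (hbound : ∀ z ∈ ball (0 : ℂ) R, ‖g z - z * deriv g z - g 0‖ ≤ M) {z : ℂ} (hz : z ∈ ball 0 R) :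
    ‖g z - z * deriv g z - g 0‖ ≤ M * (‖z‖ / R) ^ 2 := by
  have hR : 0 < R := pos_of_mem_ball hz
  have hg' : DifferentiableOn ℂ (deriv g) (ball 0 R) :=
    (hg.analyticOnNhd isOpen_ball).deriv.differentiableOn
  have hd : DifferentiableOn ℂ (fun w => g w - w * deriv g w - g 0) (ball 0 R) :=
    ((hg.sub (differentiableOn_id.mul hg')).sub_const _)
  have h_maps : MapsTo (fun w => g w - w * deriv g w - g 0) (ball 0 R)
      (closedBall (g 0 - 0 * deriv g 0 - g 0) M) := fun w hw => by
    simpa using hbound w hw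
  have hzero : HasDerivAt (fun w => g w - w * deriv g w - g 0) 0 0 := by
    have h0 : ball (0 : ℂ) R ∈ 𝓝 0 := isOpen_ball.mem_nhds (mem_ball_self hR)
    simpa using ((hasDerivAt_sub_mul_deriv (hg.differentiableAt h0)
      (hg'.differentiableAt h0)).sub_const (g 0))
  simpa using dist_le_mul_div_sq_of_mapsTo_ball_of_hasDerivAt_zero hd h_maps hzero hz

theorem norm_deriv_dslope_zero_le {g : ℂ → ℂ} {U : Set ℂ} {C : ℝ} (hU : IsOpen U)
    (hg : DifferentiableOn ℂ g U) (hψ : ∀ z ∈ U, ‖g z - z * deriv g z - g 0‖ ≤ C * ‖z‖ ^ 2)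
    {z : ℂ} (hz : z ∈ U) : ‖deriv (dslope g 0) z‖ ≤ C := by
  have h_ne : ∀ z ∈ U, z ≠ 0 → ‖deriv (dslope g 0) z‖ ≤ C := by
    intro z hz hz0
    have hd := (hasDerivAt_dslope_of_ne (hg.differentiableAt (hU.mem_nhds hz)) hz0).deriv
    have hformula : deriv (dslope g 0) z = -(g z - z * deriv g z - g 0) / z ^ 2 := by
      rw [hd, dslope_of_ne g hz0, slope_def_field, smul_eq_mul]
      field_simp
      ring
    rw [hformula, norm_div, norm_neg, norm_pow, div_le_iff₀ (by positivity)]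
    exact hψ z hz
  rcases eq_or_ne z 0 with rfl | hz0
  · have hH : DifferentiableOn ℂ (dslope g 0) U := (differentiableOn_dslope (hU.mem_nhds hz)).2 hg
    have hc : ContinuousAt (deriv (dslope g 0)) 0 :=
      ((hH.analyticOnNhd hU).deriv 0 hz).continuousAt
    refine le_of_tendsto (hc.tendsto.mono_left (nhdsWithin_le_nhds (s := {0}ᶜ))).norm ?_
    filter_upwards [nhdsWithin_le_nhds (hU.mem_nhds hz), self_mem_nhdsWithin] with w hw hw0
    exact h_ne w hw hw0
  · exact h_ne z hz hz0

theorem injOn_div_of_lipschitzOnWith_dslope {g : ℂ → ℂ} (hg0 : g 0 = 1)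
    (hLip : LipschitzOnWith 1 (dslope g 0) (ball 0 1)) :
    InjOn (fun z => z / g z) {z ∈ ball 0 1 | g z ≠ 0} := by
  rintro z₁ ⟨hz₁, hg₁⟩ z₂ ⟨hz₂, hg₂⟩ heq
  by_contra hne
  simp only at heq
  have hz₁0 : z₁ ≠ 0 := by
    rintro rfl
    simp [eq_comm (a := (0 : ℂ)), hg₂, Ne.symm hne] at heq
  have hz₂0 : z₂ ≠ 0 := by
    rintro rfl
    simp [hg₁, hne] at heq
  have hslope : ∀ z ≠ (0 : ℂ), dslope g 0 z = g z / z - 1 / z := fun z hz => by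
    rw [dslope_of_ne g hz, slope_def_field, hg0, sub_zero, sub_div]
  have key : dslope g 0 z₁ - dslope g 0 z₂ = (z₁ - z₂) / (z₁ * z₂) := by
    have hrecip : g z₁ / z₁ = g z₂ / z₂ := by rw [← inv_div, heq, inv_div]
    rw [hslope z₁ hz₁0, hslope z₂ hz₂0, hrecip]
    field_simp
    ring
  have hdist := hLip.dist_le_mul z₁ hz₁ z₂ hz₂
  rw [dist_eq_norm, dist_eq_norm, key, norm_div, norm_mul, NNReal.coe_one, one_mul,
    div_le_iff₀ (by simp [hz₁0, hz₂0])] at hdist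
  rw [mem_ball_zero_iff] at hz₁ hz₂
  have hprod : ‖z₁‖ * ‖z₂‖ < 1 := mul_lt_one_of_nonneg_of_lt_one_left (norm_nonneg _) hz₁ hz₂.le
  have hsub : 0 < ‖z₁ - z₂‖ := norm_pos_iff.2 (sub_ne_zero.2 hne)
  nlinarith

/-- **Theorem 1a.** If `g` is holomorphic on the unit disk with `g 0 = 1` and
`|g(z) - z g'(z) - 1| < 1` on the disk, then `z ↦ z / g z` is injective on
`{z ∈ D : g z ≠ 0}` (i.e. the meromorphic function `f = z / g` with
`f(0) = 0`, `f'(0) = 1` satisfying `|z/f - z (z/f)' - 1| < 1` is univalent). -/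
theorem stmt_0 (g : ℂ → ℂ)
    (hg : DifferentiableOn ℂ g (ball (0 : ℂ) 1))
    (hg0 : g 0 = 1)
    (hcond : ∀ z ∈ ball (0 : ℂ) 1, ‖g z - z * deriv g z - 1‖ < 1) :
    Set.InjOn (fun z => z / g z) {z ∈ ball (0 : ℂ) 1 | g z ≠ 0} := by
  have hbound : ∀ z ∈ ball (0 : ℂ) 1, ‖g z - z * deriv g z - g 0‖ ≤ 1 := fun z hz => by
    rw [hg0]
    exact (hcond z hz).le
  have hψ : ∀ z ∈ ball (0 : ℂ) 1, ‖g z - z * deriv g z - g 0‖ ≤ 1 * ‖z‖ ^ 2 := fun z hz => by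
    simpa using norm_sub_mul_deriv_sub_le_sq hg hbound hz
  have hH : DifferentiableOn ℂ (dslope g 0) (ball 0 1) :=
    (differentiableOn_dslope (isOpen_ball.mem_nhds (mem_ball_self one_pos))).2 hg
  have hLip : LipschitzOnWith 1 (dslope g 0) (ball 0 1) :=
    (convex_ball 0 1).lipschitzOnWith_of_nnnorm_deriv_le
      (fun z hz => hH.differentiableAt (isOpen_ball.mem_nhds hz))
      (fun z hz => by exact_mod_cast norm_deriv_dslope_zero_le isOpen_ball hg hψ hz)
  exact injOn_div_of_lipschitzOnWith_dslope hg0 hLip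
end

section
/- Let g be holomorphic on the open unit disk D with g(0) = 1. Then |g(z) − z·g'(z) − 1| < 1 for all z ∈ D if and only if there exist a constant c ∈ ℂ and a holomorphic function ω on D with |ω(z)| ≤ 1 for all z ∈ D such that g(z) = 1 + c·z − z·∫₀ᶻ ω(t) dt for all z ∈ D, the integral being along the straight line segment from 0 to z. (This is the equivalence of condition (f1) with the representation (f3).) -/
/-! Write `g = 1 + z u` with `u = dslope g 0`. Then `g - z g' - 1 = -z² u'`, so (f1) says exactly
that `z² ω` maps the disk into itself for `ω = -u'`; the Schwarz lemma, applied twice, turns this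
into `|ω| ≤ 1`, and integrating `u' = -ω` along `[0, z]` gives (f3) with `c = u 0 = g'(0)`.
Conversely, a holomorphic function on a disk has a primitive, so `z ↦ ∫₀ᶻ ω` has derivative `ω`
and the same identity gives `g - z g' - 1 = z² ω`. -/

open Complex Metric

/-- Contour integral of `ω` along the straight line segment from `z₁` to `z₂`:
`∫_{z₁}^{z₂} ω(t) dt = (z₂ - z₁) ∫₀¹ ω(z₁ + s (z₂ - z₁)) ds`. -/
noncomputable def segInt (ω : ℂ → ℂ) (z₁ z₂ : ℂ) : ℂ :=
  (z₂ - z₁) * ∫ s in (0:ℝ)..(1:ℝ), ω (z₁ + (s : ℂ) * (z₂ - z₁))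

open Set Filter Topology

theorem segInt_eq_sub_of_hasDerivAt {f F : ℂ → ℂ} {z₁ z₂ : ℂ}
    (hF : ∀ w ∈ segment ℝ z₁ z₂, HasDerivAt F (f w) w)
    (hf : ContinuousOn f (segment ℝ z₁ z₂)) :
    segInt f z₁ z₂ = F z₂ - F z₁ := by
  set p : ℝ → ℂ := fun s => z₁ + (s : ℂ) * (z₂ - z₁)
  have hp : MapsTo p (uIcc 0 1) (segment ℝ z₁ z₂) := by
    intro s hs
    rw [uIcc_of_le zero_le_one] at hs
    rw [segment_eq_image']
    exact ⟨s, hs, by simp [p, Complex.real_smul]⟩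
  have hderiv : ∀ s ∈ uIcc (0:ℝ) 1, HasDerivAt (F ∘ p) ((z₂ - z₁) * f (p s)) s := by
    intro s hs
    have hline : HasDerivAt (fun w : ℂ => z₁ + w * (z₂ - z₁)) (z₂ - z₁) s := by
      simpa using ((hasDerivAt_id (s : ℂ)).mul_const (z₂ - z₁)).const_add z₁
    rw [mul_comm]
    exact ((hF _ (hp hs)).comp (s : ℂ) hline).comp_ofReal
  have hcont : ContinuousOn (fun s => (z₂ - z₁) * f (p s)) (uIcc 0 1) :=
    continuousOn_const.mul (hf.comp (by fun_prop) hp)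
  rw [segInt, ← intervalIntegral.integral_const_mul,
    intervalIntegral.integral_eq_sub_of_hasDerivAt hderiv hcont.intervalIntegrable]
  simp [p]

theorem hasDerivAt_segInt {f : ℂ → ℂ} {c z : ℂ} {r : ℝ} (hf : DifferentiableOn ℂ f (ball c r))
    (hz : z ∈ ball c r) : HasDerivAt (segInt f c) (f z) z := by
  obtain ⟨F, hF⟩ := hf.isExactOn_ball
  have hc : c ∈ ball c r := mem_ball_self (pos_of_mem_ball hz)
  have hseg : ∀ w ∈ ball c r, segInt f c w = F w - F c := fun w hw =>
    segInt_eq_sub_of_hasDerivAt (fun v hv => hF v ((convex_ball c r).segment_subset hc hw hv))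
      (hf.continuousOn.mono ((convex_ball c r).segment_subset hc hw))
  exact ((hF z hz).sub_const (F c)).congr_of_eventuallyEq
    (eventually_of_mem (isOpen_ball.mem_nhds hz) hseg)

theorem dslope_zero_id_mul {φ : ℂ → ℂ} (hφ : DifferentiableAt ℂ φ 0) :
    dslope (fun z => z * φ z) 0 = φ := by
  funext w
  rcases eq_or_ne w 0 with rfl | hw
  · rw [dslope_same]
    exact ((hasDerivAt_id' 0).mul hφ.hasDerivAt).deriv.trans (by simp)
  · rw [dslope_of_ne _ hw, slope_def_field]
    field_simp
    ring

theorem norm_le_div_pow_of_mapsTo_pow_mul {ω : ℂ → ℂ} {R : ℝ}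
    (hω : DifferentiableOn ℂ ω (ball 0 R)) (n : ℕ) {M : ℝ}
    (hmaps : MapsTo (fun z => z ^ n * ω z) (ball 0 R) (closedBall 0 M))
    {z : ℂ} (hz : z ∈ ball 0 R) : ‖ω z‖ ≤ M / R ^ n := by
  induction n generalizing M with
  | zero => simpa using hmaps hz
  | succ n ih =>
    set f : ℂ → ℂ := fun z => z ^ n * ω z
    have hf : DifferentiableOn ℂ f (ball 0 R) := (differentiableOn_pow n).mul hω
    have hdslope : dslope (fun z => z * f z) 0 = f := dslope_zero_id_mul
      (hf.differentiableAt (isOpen_ball.mem_nhds (mem_ball_self (pos_of_mem_ball hz))))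
    have hmaps' : MapsTo (fun z => z * f z) (ball 0 R) (closedBall (0 * f 0) M) := by
      simpa [f, pow_succ, mul_comm, mul_left_comm] using hmaps
    have hschwarz : MapsTo f (ball 0 R) (closedBall 0 (M / R)) := fun w hw => by
      simpa [hdslope] using
        Complex.norm_dslope_le_div_of_mapsTo_ball (by fun_prop) hmaps' hw
    simpa [pow_succ', div_div] using ih hschwarz

theorem sub_mul_deriv_sub_one_eq {g u : ℂ → ℂ} {z : ℂ} (hu : DifferentiableAt ℂ u z)
    (hgu : g =ᶠ[𝓝 z] fun w => 1 + w * u w) :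
    g z - z * deriv g z - 1 = -(z ^ 2 * deriv u z) := by
  have hderiv : HasDerivAt g (1 * u z + z * deriv u z) z :=
    (((hasDerivAt_id z).mul hu.hasDerivAt).const_add 1).congr_of_eventuallyEq hgu
  rw [hderiv.deriv, hgu.eq_of_nhds]
  ring

theorem exists_segInt_representation {g : ℂ → ℂ} (hg : DifferentiableOn ℂ g (ball (0 : ℂ) 1))
    (hg0 : g 0 = 1) (hf1 : ∀ z ∈ ball (0 : ℂ) 1, ‖g z - z * deriv g z - 1‖ < 1) :
    ∃ (c : ℂ) (ω : ℂ → ℂ), DifferentiableOn ℂ ω (ball (0 : ℂ) 1) ∧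
        (∀ z ∈ ball (0 : ℂ) 1, ‖ω z‖ ≤ 1) ∧
        ∀ z ∈ ball (0 : ℂ) 1, g z = 1 + c * z - z * segInt ω 0 z := by
  set u := dslope g 0
  have hu : DifferentiableOn ℂ u (ball 0 1) :=
    (Complex.differentiableOn_dslope (ball_mem_nhds 0 one_pos)).mpr hg
  have hgu : g = fun w => 1 + w * u w := by
    funext w
    have := sub_smul_dslope g 0 w
    rw [sub_zero, smul_eq_mul, hg0] at this
    rw [this]
    ring
  have hω : DifferentiableOn ℂ (-deriv u) (ball 0 1) := (hu.deriv isOpen_ball).neg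
  have hderiv : ∀ w ∈ ball (0 : ℂ) 1, HasDerivAt (-u) ((-deriv u) w) w := fun w hw =>
    ((hu.differentiableAt (isOpen_ball.mem_nhds hw)).hasDerivAt).neg
  refine ⟨u 0, -deriv u, hω, fun z hz => ?_, fun z hz => ?_⟩
  · refine (norm_le_div_pow_of_mapsTo_pow_mul hω 2 (M := 1) (fun w hw => ?_) hz).trans_eq
      (by simp)
    have := sub_mul_deriv_sub_one_eq (hu.differentiableAt (isOpen_ball.mem_nhds hw))
      (EventuallyEq.of_eq hgu)
    simp only [mem_closedBall_zero_iff, Pi.neg_apply, mul_neg]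
    rw [← this]
    exact (hf1 w hw).le
  · have hz' : segment ℝ 0 z ⊆ ball 0 1 :=
      (convex_ball 0 1).segment_subset (mem_ball_self one_pos) hz
    rw [segInt_eq_sub_of_hasDerivAt (fun w hw => hderiv w (hz' hw))
      (hω.continuousOn.mono hz'), hgu]
    simp only [Pi.neg_apply]
    ring

theorem norm_sub_mul_deriv_sub_one_lt_one {g ω : ℂ → ℂ} {c : ℂ}
    (hω : DifferentiableOn ℂ ω (ball (0 : ℂ) 1)) (hbd : ∀ z ∈ ball (0 : ℂ) 1, ‖ω z‖ ≤ 1)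
    (hrep : ∀ z ∈ ball (0 : ℂ) 1, g z = 1 + c * z - z * segInt ω 0 z) {z : ℂ}
    (hz : z ∈ ball (0 : ℂ) 1) : ‖g z - z * deriv g z - 1‖ < 1 := by
  have hu : HasDerivAt (fun w => c - segInt ω 0 w) (-ω z) z := by
    simpa using (hasDerivAt_segInt hω hz).const_sub c
  have hgu : g =ᶠ[𝓝 z] fun w => 1 + w * (c - segInt ω 0 w) :=
    eventually_of_mem (isOpen_ball.mem_nhds hz) fun w hw => by rw [hrep w hw]; ring
  rw [sub_mul_deriv_sub_one_eq hu.differentiableAt hgu, hu.deriv, mul_neg, neg_neg, norm_mul,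
    norm_pow]
  calc ‖z‖ ^ 2 * ‖ω z‖ ≤ ‖z‖ ^ 2 * 1 := by gcongr; exact hbd z hz
    _ < 1 := by
      rw [mul_one]
      exact pow_lt_one₀ (norm_nonneg z) (mem_ball_zero_iff.mp hz) two_ne_zero

/-- Equivalence of condition (f1) with the representation (f3): for `g`
holomorphic on the unit disk with `g 0 = 1`, `|g(z) - z g'(z) - 1| < 1` on the
disk iff `g(z) = 1 + c z - z ∫₀ᶻ ω(t) dt` for some constant `c` and some
holomorphic `ω` with `|ω| ≤ 1` on the disk. -/
theorem stmt_2 (g : ℂ → ℂ)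
    (hg : DifferentiableOn ℂ g (ball (0 : ℂ) 1))
    (hg0 : g 0 = 1) :
    (∀ z ∈ ball (0 : ℂ) 1, ‖g z - z * deriv g z - 1‖ < 1) ↔
      ∃ (c : ℂ) (ω : ℂ → ℂ), DifferentiableOn ℂ ω (ball (0 : ℂ) 1) ∧
        (∀ z ∈ ball (0 : ℂ) 1, ‖ω z‖ ≤ 1) ∧
        ∀ z ∈ ball (0 : ℂ) 1, g z = 1 + c * z - z * segInt ω 0 z :=
  ⟨exists_segInt_representation hg hg0, fun ⟨_, _, hω, hbd, hrep⟩ _ hz =>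
    norm_sub_mul_deriv_sub_one_lt_one hω hbd hrep hz⟩
end

section
/- Let ω be holomorphic on the open unit disk D with |ω(z)| ≤ 1 for all z ∈ D, let c ∈ ℂ, and set A(z) = 1 + c·z − z·∫₀ᶻ ω(t) dt (segment integral). Then A has at most one zero in D; that is, there do not exist distinct z₁, z₂ ∈ D with A(z₁) = A(z₂) = 0. (Consequently, a meromorphic f with f(0) = 0, f'(0) = 1 satisfying |z/f(z) − z(z/f(z))' − 1| < 1 on D has at most one pole in D.) -/
open Complex Metric

lemma add_ofReal_mul_sub_mem_segment {a b : ℂ} {s : ℝ} (hs : s ∈ Set.Icc (0 : ℝ) 1) :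
    a + (s : ℂ) * (b - a) ∈ segment ℝ a b := by
  rw [segment_eq_image']
  exact ⟨s, hs, by simp [Complex.real_smul]⟩

lemma segInt_eq_sub_of_hasDerivAt_s7 {U : Set ℂ} (hU : Convex ℝ U) {ω g : ℂ → ℂ}
    (hg : ∀ z ∈ U, HasDerivAt g (ω z) z) (hω : ContinuousOn ω U) {a b : ℂ}
    (ha : a ∈ U) (hb : b ∈ U) :
    segInt ω a b = g b - g a := by
  have hmem : ∀ s ∈ Set.Icc (0 : ℝ) 1, a + (s : ℂ) * (b - a) ∈ U := fun s hs ↦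
    hU.segment_subset ha hb (add_ofReal_mul_sub_mem_segment hs)
  have hderiv : ∀ s ∈ Set.uIcc (0 : ℝ) 1, HasDerivAt (fun s : ℝ ↦ g (a + (s : ℂ) * (b - a)))
      ((b - a) * ω (a + (s : ℂ) * (b - a))) s := by
    intro s hs
    rw [Set.uIcc_of_le zero_le_one] at hs
    have hline : HasDerivAt (fun w : ℂ ↦ a + w * (b - a)) (b - a) (s : ℂ) := by
      simpa using ((hasDerivAt_id (s : ℂ)).mul_const (b - a)).const_add a
    simpa [mul_comm] using ((hg _ (hmem s hs)).comp (s : ℂ) hline).comp_ofReal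
  have hint : IntervalIntegrable (fun s : ℝ ↦ (b - a) * ω (a + (s : ℂ) * (b - a)))
      MeasureTheory.volume 0 1 := by
    refine ContinuousOn.intervalIntegrable ?_
    rw [Set.uIcc_of_le zero_le_one]
    exact continuousOn_const.mul <| hω.comp (by fun_prop) hmem
  rw [segInt, ← intervalIntegral.integral_const_mul,
    intervalIntegral.integral_eq_sub_of_hasDerivAt hderiv hint]
  simp

/-- Cauchy's theorem for triangles in a disk. -/
lemma segInt_sub_segInt {ω : ℂ → ℂ} {c : ℂ} {r : ℝ} (hω : DifferentiableOn ℂ ω (ball c r))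
    {x a b : ℂ} (hx : x ∈ ball c r) (ha : a ∈ ball c r) (hb : b ∈ ball c r) :
    segInt ω x b - segInt ω x a = segInt ω a b := by
  obtain ⟨g, hg⟩ := hω.isExactOn_ball
  have hseg := fun {p q : ℂ} (hp : p ∈ ball c r) (hq : q ∈ ball c r) ↦
    segInt_eq_sub_of_hasDerivAt_s7 (convex_ball c r) hg hω.continuousOn hp hq
  rw [hseg hx hb, hseg hx ha, hseg ha hb]
  ring

lemma norm_segInt_le {ω : ℂ → ℂ} {a b : ℂ} {M : ℝ} (hM : ∀ z ∈ segment ℝ a b, ‖ω z‖ ≤ M) :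
    ‖segInt ω a b‖ ≤ ‖b - a‖ * M := by
  rw [segInt, norm_mul]
  gcongr
  have := intervalIntegral.norm_integral_le_of_norm_le_const fun s hs ↦
    hM _ (add_ofReal_mul_sub_mem_segment (s := s) (by
      rw [Set.uIoc_of_le zero_le_one] at hs; exact Set.Ioc_subset_Icc_self hs))
  rwa [sub_zero, abs_one, mul_one] at this

/-- The function `A(z) = 1 + c z - z ∫₀ᶻ ω(t) dt`, with `ω` holomorphic and
`|ω| ≤ 1` on the unit disk, has at most one zero in the disk (so a meromorphic
`f` with `f(0)=0`, `f'(0)=1` satisfying condition (f1) has at most one pole). -/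
theorem stmt_7 (ω : ℂ → ℂ) (c : ℂ)
    (hω : DifferentiableOn ℂ ω (ball (0 : ℂ) 1))
    (hbd : ∀ z ∈ ball (0 : ℂ) 1, ‖ω z‖ ≤ 1)
    (A : ℂ → ℂ)
    (hA : ∀ z ∈ ball (0 : ℂ) 1, A z = 1 + c * z - z * segInt ω 0 z) :
    ∀ z₁ ∈ ball (0 : ℂ) 1, ∀ z₂ ∈ ball (0 : ℂ) 1,
      A z₁ = 0 → A z₂ = 0 → z₁ = z₂ := by
  intro z₁ h₁ z₂ h₂ hA₁ hA₂
  by_contra hne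
  have hkey : z₁ * z₂ * segInt ω z₂ z₁ = z₂ - z₁ := by
    rw [← segInt_sub_segInt hω (mem_ball_self one_pos) h₂ h₁]
    linear_combination z₁ * (hA z₂ h₂).symm.trans hA₂ - z₂ * (hA z₁ h₁).symm.trans hA₁
  have hS : ‖segInt ω z₂ z₁‖ ≤ ‖z₂ - z₁‖ := by
    simpa [norm_sub_rev] using norm_segInt_le (M := 1) fun z hz ↦
      hbd z ((convex_ball 0 1).segment_subset h₂ h₁ hz)
  have hr₁ : ‖z₁‖ < 1 := mem_ball_zero_iff.mp h₁
  have hr₂ : ‖z₂‖ < 1 := mem_ball_zero_iff.mp h₂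
  have hd : 0 < ‖z₂ - z₁‖ := norm_pos_iff.mpr (sub_ne_zero.mpr (Ne.symm hne))
  have hnorm : ‖z₂ - z₁‖ = ‖z₁‖ * ‖z₂‖ * ‖segInt ω z₂ z₁‖ := by
    rw [← hkey, norm_mul, norm_mul]
  have : ‖z₁‖ * ‖z₂‖ * ‖segInt ω z₂ z₁‖ < ‖z₂ - z₁‖ :=
    calc ‖z₁‖ * ‖z₂‖ * ‖segInt ω z₂ z₁‖ ≤ ‖z₁‖ * ‖z₂‖ * ‖z₂ - z₁‖ := by gcongr
      _ < ‖z₂ - z₁‖ :=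
        mul_lt_of_lt_one_left hd (mul_lt_one_of_nonneg_of_lt_one_left (norm_nonneg _) hr₁ hr₂.le)
  linarith
end

section
/- Let λ ∈ (0, 1], p ∈ (0, 1], r ∈ (0, 1), let ω be holomorphic on the open unit disk D with |ω(z)| ≤ 1 for all z ∈ D, and let a₂ ∈ ℂ with |a₂| = (1 + λ·p²)/(p·r). Define F(z) = (1/a₂)·(1 − λ·z·∫₀ᶻ ω(t) dt) (segment integral). Then for every z with |z| ≤ p·r one has |F(z)| ≤ p·r·(1 + λ·p²·r²)/(1 + λ·p²) < p·r; in particular F maps the closed disk {z : |z| ≤ p·r} into itself. -/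
/-
Since `|ω| ≤ 1` on the segment `[0, z]`, the segment integral satisfies `|∫₀ᶻ ω| ≤ |z|`, so
`|1 - λ z ∫₀ᶻ ω| ≤ 1 + λ|z|² ≤ 1 + λ p² r²` on `|z| ≤ p r`. Dividing by `|a₂| = (1 + λ p²)/(p r)`
gives the bound, which is `< p r` because `r² < 1`.
-/

open Complex Metric

theorem norm_segInt_le_s10 {ω : ℂ → ℂ} {z₁ z₂ : ℂ} {M : ℝ}
    (h : ∀ w ∈ segment ℝ z₁ z₂, ‖ω w‖ ≤ M) : ‖segInt ω z₁ z₂‖ ≤ ‖z₂ - z₁‖ * M := by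
  have hint : ‖∫ s in (0:ℝ)..(1:ℝ), ω (z₁ + (s : ℂ) * (z₂ - z₁))‖ ≤ M := by
    have := intervalIntegral.norm_integral_le_of_norm_le_const
      (f := fun s : ℝ => ω (z₁ + (s : ℂ) * (z₂ - z₁))) fun s hs => by
        rw [Set.uIoc_of_le zero_le_one] at hs
        refine h _ ?_
        rw [segment_eq_image']
        exact ⟨s, Set.Ioc_subset_Icc_self hs, by simp [Complex.real_smul]⟩
    rwa [sub_zero, abs_one, mul_one] at this
  rw [segInt, norm_mul]
  gcongr

theorem norm_segInt_zero_le_of_norm_le_one {ω : ℂ → ℂ}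
    (hbd : ∀ z ∈ ball (0 : ℂ) 1, ‖ω z‖ ≤ 1) {z : ℂ} (hz : ‖z‖ < 1) :
    ‖segInt ω 0 z‖ ≤ ‖z‖ := by
  have hseg : segment ℝ 0 z ⊆ ball (0 : ℂ) 1 :=
    (convex_ball _ _).segment_subset (mem_ball_self one_pos) (mem_ball_zero_iff.mpr hz)
  simpa using norm_segInt_le_s10 fun w hw => hbd w (hseg hw)

theorem norm_one_sub_mul_segInt_le {ω : ℂ → ℂ}
    (hbd : ∀ z ∈ ball (0 : ℂ) 1, ‖ω z‖ ≤ 1) {lam : ℝ} (hlam : 0 ≤ lam) {z : ℂ} (hz : ‖z‖ < 1) :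
    ‖1 - (lam : ℂ) * z * segInt ω 0 z‖ ≤ 1 + lam * ‖z‖ ^ 2 :=
  calc ‖1 - (lam : ℂ) * z * segInt ω 0 z‖
      ≤ ‖(1 : ℂ)‖ + ‖(lam : ℂ) * z * segInt ω 0 z‖ := norm_sub_le _ _
    _ = 1 + lam * (‖z‖ * ‖segInt ω 0 z‖) := by
        rw [norm_one, norm_mul, norm_mul, Complex.norm_of_nonneg hlam, mul_assoc]
    _ ≤ 1 + lam * (‖z‖ * ‖z‖) := by
        gcongr
        exact norm_segInt_zero_le_of_norm_le_one hbd hz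
    _ = 1 + lam * ‖z‖ ^ 2 := by ring

theorem mul_one_add_mul_sq_div_one_add_lt {x c r : ℝ} (hx : 0 < x) (hc : 0 < c)
    (hr : r ^ 2 < 1) : x * (1 + c * r ^ 2) / (1 + c) < x := by
  rw [div_lt_iff₀ (by positivity)]
  have : c * r ^ 2 < c := by nlinarith
  nlinarith

theorem stmt_10_general (lam p r : ℝ) (hlam : lam ∈ Set.Ioc (0 : ℝ) 1)
    (hp : p ∈ Set.Ioc (0 : ℝ) 1) (hr : r ∈ Set.Ioo (0 : ℝ) 1)
    (ω : ℂ → ℂ)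
    (hbd : ∀ z ∈ ball (0 : ℂ) 1, ‖ω z‖ ≤ 1)
    (a₂ : ℂ) (ha₂ : ‖a₂‖ = (1 + lam * p ^ 2) / (p * r))
    (F : ℂ → ℂ)
    (hF : ∀ z : ℂ, ‖z‖ ≤ p * r →
      F z = (1 / a₂) * (1 - (lam : ℂ) * z * segInt ω 0 z)) :
    (∀ z : ℂ, ‖z‖ ≤ p * r →
        ‖F z‖ ≤ p * r * (1 + lam * p ^ 2 * r ^ 2) / (1 + lam * p ^ 2)) ∧
      p * r * (1 + lam * p ^ 2 * r ^ 2) / (1 + lam * p ^ 2) < p * r ∧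
      Set.MapsTo F (closedBall (0 : ℂ) (p * r)) (closedBall (0 : ℂ) (p * r)) := by
  obtain ⟨hlam0, -⟩ := hlam
  obtain ⟨hp0, hp1⟩ := hp
  obtain ⟨hr0, hr1⟩ := hr
  have hpr0 : 0 < p * r := mul_pos hp0 hr0
  have hpr1 : p * r < 1 := (mul_le_of_le_one_left hr0.le hp1).trans_lt hr1
  have hbound : ∀ z : ℂ, ‖z‖ ≤ p * r →
      ‖F z‖ ≤ p * r * (1 + lam * p ^ 2 * r ^ 2) / (1 + lam * p ^ 2) := by
    intro z hz
    have hnum := norm_one_sub_mul_segInt_le hbd hlam0.le (hz.trans_lt hpr1)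
    have hz2 : ‖z‖ ^ 2 ≤ p ^ 2 * r ^ 2 := by rw [← mul_pow]; gcongr
    calc ‖F z‖ = ‖1 - (lam : ℂ) * z * segInt ω 0 z‖ * (p * r) / (1 + lam * p ^ 2) := by
          rw [hF z hz, norm_mul, norm_div, norm_one, ha₂, one_div_div, mul_comm, mul_div_assoc']
      _ ≤ (1 + lam * p ^ 2 * r ^ 2) * (p * r) / (1 + lam * p ^ 2) := by
          gcongr
          nlinarith
      _ = p * r * (1 + lam * p ^ 2 * r ^ 2) / (1 + lam * p ^ 2) := by ring
  have hlt : p * r * (1 + lam * p ^ 2 * r ^ 2) / (1 + lam * p ^ 2) < p * r :=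
    mul_one_add_mul_sq_div_one_add_lt hpr0 (by positivity) (by nlinarith)
  refine ⟨hbound, hlt, fun z hz => ?_⟩
  rw [mem_closedBall_zero_iff] at hz ⊢
  exact (hbound z hz).trans hlt.le

/-- With `|a₂| = (1 + λ p²)/(p r)` and `F(z) = (1/a₂)(1 - λ z ∫₀ᶻ ω(t) dt)`,
one has `|F(z)| ≤ p r (1 + λ p² r²)/(1 + λ p²) < p r` for `|z| ≤ p r`; in
particular `F` maps the closed disk of radius `p r` into itself. -/
theorem stmt_10 (lam p r : ℝ) (hlam : lam ∈ Set.Ioc (0 : ℝ) 1)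
    (hp : p ∈ Set.Ioc (0 : ℝ) 1) (hr : r ∈ Set.Ioo (0 : ℝ) 1)
    (ω : ℂ → ℂ)
    (hω : DifferentiableOn ℂ ω (ball (0 : ℂ) 1))
    (hbd : ∀ z ∈ ball (0 : ℂ) 1, ‖ω z‖ ≤ 1)
    (a₂ : ℂ) (ha₂ : ‖a₂‖ = (1 + lam * p ^ 2) / (p * r))
    (F : ℂ → ℂ)
    (hF : ∀ z : ℂ, ‖z‖ ≤ p * r →
      F z = (1 / a₂) * (1 - (lam : ℂ) * z * segInt ω 0 z)) :
    (∀ z : ℂ, ‖z‖ ≤ p * r →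
        ‖F z‖ ≤ p * r * (1 + lam * p ^ 2 * r ^ 2) / (1 + lam * p ^ 2)) ∧
      p * r * (1 + lam * p ^ 2 * r ^ 2) / (1 + lam * p ^ 2) < p * r ∧
      Set.MapsTo F (closedBall (0 : ℂ) (p * r)) (closedBall (0 : ℂ) (p * r)) :=
  stmt_10_general lam p r hlam hp hr ω hbd a₂ ha₂ F hF
end

section
/- Let λ ∈ (0, 1], p ∈ (0, 1], r ∈ (0, 1), let ω be holomorphic on the open unit disk D with |ω(z)| ≤ 1 for all z ∈ D, and let a₂ ∈ ℂ with |a₂| = (1 + λ·p²)/(p·r). Define F(z) = (1/a₂)·(1 − λ·z·∫₀ᶻ ω(t) dt) (segment integral). Then for all z₁, z₂ with |z₁| ≤ p·r and |z₂| ≤ p·r, |F(z₁) − F(z₂)| ≤ (2·λ·r²·p²/(1 + λ·p²))·|z₁ − z₂|, and the Lipschitz constant satisfies 2·λ·r²·p²/(1 + λ·p²) < 1; in particular F is a contraction on the closed disk {z : |z| ≤ p·r}. -/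
/-!
On the unit disk the holomorphic `ω` has a primitive `Φ`, so `∫₀ᶻ ω = Φ z - Φ 0`, and `|ω| ≤ 1`
makes `Φ` 1-Lipschitz. Writing `z₁(Φ z₁ - Φ 0) - z₂(Φ z₂ - Φ 0)` as
`z₁(Φ z₁ - Φ z₂) + (z₁ - z₂)(Φ z₂ - Φ 0)` shows that `z ↦ z ∫₀ᶻ ω` is `2pr`-Lipschitz on the disk
of radius `pr`; multiplying by `λ/|a₂| = λpr/(1 + λp²)` gives the constant.
-/

open Complex Metric

lemma segInt_eq_sub_of_hasDerivAt_s11 {ω Φ : ℂ → ℂ} {a b : ℂ}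
    (hΦ : ∀ t ∈ segment ℝ a b, HasDerivAt Φ (ω t) t)
    (hω : ContinuousOn ω (segment ℝ a b)) :
    segInt ω a b = Φ b - Φ a := by
  have hpath : ∀ s ∈ Set.Icc (0:ℝ) 1, a + (s : ℂ) * (b - a) ∈ segment ℝ a b := fun s hs => by
    rw [segment_eq_image']
    exact ⟨s, hs, by simp [Complex.real_smul]⟩
  have hderiv : ∀ s ∈ Set.uIcc (0:ℝ) 1, HasDerivAt (fun s : ℝ => Φ (a + (s : ℂ) * (b - a)))
      ((b - a) * ω (a + (s : ℂ) * (b - a))) s := fun s hs => by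
    rw [Set.uIcc_of_le zero_le_one] at hs
    have hline : HasDerivAt (fun w : ℂ => a + w * (b - a)) (b - a) (s : ℂ) := by
      simpa using ((hasDerivAt_id (s : ℂ)).mul_const (b - a)).const_add a
    simpa [mul_comm] using ((hΦ _ (hpath s hs)).comp (s : ℂ) hline).comp_ofReal
  have hcont : ContinuousOn (fun s : ℝ => (b - a) * ω (a + (s : ℂ) * (b - a)))
      (Set.uIcc 0 1) := by
    rw [Set.uIcc_of_le zero_le_one]
    exact continuousOn_const.mul (hω.comp (by fun_prop) hpath)
  rw [segInt, ← intervalIntegral.integral_const_mul,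
    intervalIntegral.integral_eq_sub_of_hasDerivAt hderiv hcont.intervalIntegrable]
  simp

lemma LipschitzOnWith.norm_mul_sub_sub_le {R : Type*} [SeminormedRing R] {Φ : R → R} {ρ : ℝ}
    (hΦ : LipschitzOnWith 1 Φ (closedBall 0 ρ)) {z w : R}
    (hz : z ∈ closedBall 0 ρ) (hw : w ∈ closedBall 0 ρ) :
    ‖z * (Φ z - Φ 0) - w * (Φ w - Φ 0)‖ ≤ 2 * ρ * ‖z - w‖ := by
  rw [mem_closedBall_zero_iff] at hz hw
  have hρ : 0 ≤ ρ := (norm_nonneg z).trans hz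
  have h0 : (0 : R) ∈ closedBall 0 ρ := mem_closedBall_self hρ
  have hzw : ‖Φ z - Φ w‖ ≤ ‖z - w‖ := by
    simpa using hΦ.norm_sub_le (mem_closedBall_zero_iff.2 hz) (mem_closedBall_zero_iff.2 hw)
  have hw0 : ‖Φ w - Φ 0‖ ≤ ρ := by
    simpa using hΦ.norm_sub_le_of_le (mem_closedBall_zero_iff.2 hw) h0 (by simpa using hw)
  calc ‖z * (Φ z - Φ 0) - w * (Φ w - Φ 0)‖
      = ‖z * (Φ z - Φ w) + (z - w) * (Φ w - Φ 0)‖ := by noncomm_ring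
    _ ≤ ‖z‖ * ‖Φ z - Φ w‖ + ‖z - w‖ * ‖Φ w - Φ 0‖ :=
      (norm_add_le _ _).trans (add_le_add (norm_mul_le _ _) (norm_mul_le _ _))
    _ ≤ ρ * ‖z - w‖ + ‖z - w‖ * ρ := by gcongr
    _ = 2 * ρ * ‖z - w‖ := by ring

lemma contraction_constant_lt_one {lam p r : ℝ} (hlam : 0 < lam) (hlam1 : lam ≤ 1)
    (hp : 0 < p) (hp1 : p ≤ 1) (hr : 0 < r) (hr1 : r < 1) :
    2 * lam * r ^ 2 * p ^ 2 / (1 + lam * p ^ 2) < 1 := by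
  have hlp : 0 < lam * p ^ 2 := by positivity
  have hlp1 : lam * p ^ 2 ≤ 1 := by nlinarith
  have hr2 : r ^ 2 < 1 := by nlinarith
  rw [div_lt_one (by positivity)]
  nlinarith

/-- With `|a₂| = (1 + λ p²)/(p r)` and `F(z) = (1/a₂)(1 - λ z ∫₀ᶻ ω(t) dt)`,
`F` is Lipschitz on the closed disk `{|z| ≤ p r}` with constant
`2 λ r² p²/(1 + λ p²) < 1`; in particular `F` is a contraction there. -/
theorem stmt_11 (lam p r : ℝ) (hlam : lam ∈ Set.Ioc (0 : ℝ) 1)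
    (hp : p ∈ Set.Ioc (0 : ℝ) 1) (hr : r ∈ Set.Ioo (0 : ℝ) 1)
    (ω : ℂ → ℂ)
    (hω : DifferentiableOn ℂ ω (ball (0 : ℂ) 1))
    (hbd : ∀ z ∈ ball (0 : ℂ) 1, ‖ω z‖ ≤ 1)
    (a₂ : ℂ) (ha₂ : ‖a₂‖ = (1 + lam * p ^ 2) / (p * r))
    (F : ℂ → ℂ)
    (hF : ∀ z : ℂ, ‖z‖ ≤ p * r →
      F z = (1 / a₂) * (1 - (lam : ℂ) * z * segInt ω 0 z)) :
    (∀ z₁ : ℂ, ‖z₁‖ ≤ p * r → ∀ z₂ : ℂ, ‖z₂‖ ≤ p * r →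
        ‖F z₁ - F z₂‖ ≤ 2 * lam * r ^ 2 * p ^ 2 / (1 + lam * p ^ 2) * ‖z₁ - z₂‖) ∧
      2 * lam * r ^ 2 * p ^ 2 / (1 + lam * p ^ 2) < 1 := by
  obtain ⟨hlam0, hlam1⟩ := hlam
  obtain ⟨hp0, hp1⟩ := hp
  obtain ⟨hr0, hr1⟩ := hr
  set K := closedBall (0 : ℂ) (p * r)
  have hK : K ⊆ ball 0 1 := closedBall_subset_ball (by nlinarith)
  obtain ⟨Φ, hΦ⟩ := hω.isExactOn_ball
  have hseg : ∀ z ∈ K, segInt ω 0 z = Φ z - Φ 0 := fun z hz =>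
    have hsegK := (convex_closedBall _ _).segment_subset (mem_closedBall_self (by positivity)) hz
    segInt_eq_sub_of_hasDerivAt_s11 (fun t ht => hΦ t (hK (hsegK ht)))
      (hω.continuousOn.mono (hsegK.trans hK))
  have hlip : LipschitzOnWith 1 Φ K :=
    (convex_closedBall _ _).lipschitzOnWith_of_nnnorm_hasDerivWithin_le
      (fun z hz => (hΦ z (hK hz)).hasDerivWithinAt)
      (fun z hz => by simpa [← NNReal.coe_le_one] using hbd z (hK hz))
  have hscale : ‖(lam : ℂ) / a₂‖ = lam * (p * r) / (1 + lam * p ^ 2) := by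
    rw [norm_div, ha₂, Complex.norm_real, Real.norm_of_nonneg hlam0.le, div_div_eq_mul_div]
  refine ⟨fun z₁ hz₁ z₂ hz₂ => ?_, contraction_constant_lt_one hlam0 hlam1 hp0 hp1 hr0 hr1⟩
  have hz₁K : z₁ ∈ K := mem_closedBall_zero_iff.2 hz₁
  have hz₂K : z₂ ∈ K := mem_closedBall_zero_iff.2 hz₂
  have hdiff : F z₁ - F z₂ = -((lam : ℂ) / a₂) * (z₁ * (Φ z₁ - Φ 0) - z₂ * (Φ z₂ - Φ 0)) := by
    rw [hF z₁ hz₁, hF z₂ hz₂, hseg z₁ hz₁K, hseg z₂ hz₂K]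
    ring
  calc ‖F z₁ - F z₂‖
      = lam * (p * r) / (1 + lam * p ^ 2) * ‖z₁ * (Φ z₁ - Φ 0) - z₂ * (Φ z₂ - Φ 0)‖ := by
        rw [hdiff, norm_mul, norm_neg, hscale]
    _ ≤ lam * (p * r) / (1 + lam * p ^ 2) * (2 * (p * r) * ‖z₁ - z₂‖) := by
        gcongr
        exact hlip.norm_mul_sub_sub_le hz₁K hz₂K
    _ = 2 * lam * r ^ 2 * p ^ 2 / (1 + lam * p ^ 2) * ‖z₁ - z₂‖ := by ring
end

section
/- Let λ ∈ (0, 1], p ∈ (0, 1], and θ, φ ∈ ℝ. If the quadratic polynomial Q(z) = 1 − ((1 + λ·p²)/p)·e^{iθ}·z − λ·e^{iφ}·z² has no zero in the disk {z ∈ ℂ : |z| < p}, then e^{iφ} = −e^{2iθ}, i.e. Q(z) = 1 − ((1 + λ·p²)/p)·e^{iθ}·z + λ·e^{2iθ}·z² = (1 − e^{iθ}·z/p)·(1 − λ·p·e^{iθ}·z). -/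
/-!
Factor `Q(z) = (1 - a z)(1 - b z)` with `a + b = ((1 + λp²)/p) e^{iθ}` and `a b = -λ e^{iφ}`.
Zero-freeness on `{|z| < p}` gives `|a|, |b| ≤ 1/p`, hence `(1/p - |a|)(1/p - |b|) ≥ 0`, i.e.
`|a| + |b| ≤ 1/p + λp = |a + b|`. Equality in the triangle inequality puts `a` and `b` on the ray
through `e^{iθ}`, so `a b = |a| |b| e^{2iθ} = λ e^{2iθ}`.
-/

open Complex

theorem exists_add_eq_and_mul_eq {K : Type*} [Field K] [IsAlgClosed K] [NeZero (2 : K)]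
    (s t : K) : ∃ a b : K, a + b = s ∧ a * b = t := by
  obtain ⟨a, ha⟩ := exists_quadratic_eq_zero one_ne_zero
    (IsAlgClosed.exists_eq_mul_self (discrim 1 (-s) t))
  exact ⟨a, s - a, by ring, by linear_combination -ha⟩

theorem norm_mul_le_one_of_one_sub_mul_ne_zero {𝕜 : Type*} [NormedDivisionRing 𝕜] {a : 𝕜}
    {p : ℝ} (h : ∀ z : 𝕜, ‖z‖ < p → 1 - a * z ≠ 0) : ‖a‖ * p ≤ 1 := by
  by_contra! hlt
  have ha : a ≠ 0 := by rintro rfl; simp at hlt; linarith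
  refine h a⁻¹ ?_ (by rw [mul_inv_cancel₀ ha, sub_self])
  rwa [norm_inv, inv_lt_iff_one_lt_mul₀' (norm_pos_iff.2 ha)]

theorem add_le_of_mul_le_one {x y p : ℝ} (hp : 0 < p) (hx : x * p ≤ 1) (hy : y * p ≤ 1) :
    x + y ≤ (1 + x * y * p ^ 2) / p := by
  rw [le_div_iff₀ hp]
  nlinarith [mul_nonneg (sub_nonneg.2 hx) (sub_nonneg.2 hy)]

theorem Complex.mul_mul_norm_add_sq_of_norm_add_eq {a b : ℂ} (h : ‖a + b‖ = ‖a‖ + ‖b‖) :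
    a * b * ‖a + b‖ ^ 2 = ‖a‖ * ‖b‖ * (a + b) ^ 2 := by
  obtain ⟨u, α, β, hα, hβ, -, rfl, rfl⟩ := (sameRay_iff_norm_add.2 h).exists_eq_smul
  rw [← add_smul, norm_smul, norm_smul, norm_smul, Real.norm_of_nonneg hα,
    Real.norm_of_nonneg hβ, Real.norm_of_nonneg (add_nonneg hα hβ)]
  simp only [real_smul]
  push_cast
  ring

/-- The only zero-free quadratics: if
`Q(z) = 1 - ((1 + λ p²)/p) e^{iθ} z - λ e^{iφ} z²` has no zero in `{|z| < p}`,
then `e^{iφ} = -e^{2iθ}`, i.e.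
`Q(z) = 1 - ((1 + λ p²)/p) e^{iθ} z + λ e^{2iθ} z²
      = (1 - e^{iθ} z / p)(1 - λ p e^{iθ} z)`. -/
theorem stmt_15 (lam p : ℝ) (hlam : lam ∈ Set.Ioc (0 : ℝ) 1)
    (hp : p ∈ Set.Ioc (0 : ℝ) 1)
    (θ φ : ℝ)
    (Q : ℂ → ℂ)
    (hQ : ∀ z : ℂ, Q z =
      1 - (((1 + lam * p ^ 2) / p : ℝ) : ℂ) * Complex.exp (θ * Complex.I) * z
        - (lam : ℂ) * Complex.exp (φ * Complex.I) * z ^ 2)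
    (hnozero : ∀ z : ℂ, ‖z‖ < p → Q z ≠ 0) :
    Complex.exp (φ * Complex.I) = -Complex.exp (2 * θ * Complex.I) ∧
      ∀ z : ℂ, Q z =
        (1 - Complex.exp (θ * Complex.I) * z / p) *
          (1 - (lam : ℂ) * p * Complex.exp (θ * Complex.I) * z) := by
  obtain ⟨hlam, -⟩ := hlam
  obtain ⟨hp, -⟩ := hp
  set E := exp (θ * I)
  set c := (1 + lam * p ^ 2) / p
  have hE2 : exp (2 * θ * I) = E ^ 2 := by rw [sq, ← exp_add]; ring_nf
  obtain ⟨a, b, hsum, hprod⟩ := exists_add_eq_and_mul_eq (c * E) (-lam * exp (φ * I))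
  have hfac (z : ℂ) : Q z = (1 - a * z) * (1 - b * z) := by
    rw [hQ]; linear_combination z * hsum - z ^ 2 * hprod
  have ha : ‖a‖ * p ≤ 1 := norm_mul_le_one_of_one_sub_mul_ne_zero fun z hz h ↦
    hnozero z hz (by rw [hfac, h, zero_mul])
  have hb : ‖b‖ * p ≤ 1 := norm_mul_le_one_of_one_sub_mul_ne_zero fun z hz h ↦
    hnozero z hz (by rw [hfac, h, mul_zero])
  have hnorm_mul : ‖a‖ * ‖b‖ = lam := by
    rw [← norm_mul, hprod, norm_mul, norm_neg, norm_exp_ofReal_mul_I, norm_real,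
      Real.norm_of_nonneg hlam.le, mul_one]
  have hnorm_add : ‖a + b‖ = c := by
    rw [hsum, norm_mul, norm_exp_ofReal_mul_I, norm_real, Real.norm_of_nonneg (by positivity),
      mul_one]
  have htri : ‖a + b‖ = ‖a‖ + ‖b‖ := le_antisymm (norm_add_le a b)
    (by simpa only [hnorm_add, hnorm_mul] using add_le_of_mul_le_one hp ha hb)
  have hprod_sq : -lam * exp (φ * I) * c ^ 2 = lam * (c * E) ^ 2 := by
    have := mul_mul_norm_add_sq_of_norm_add_eq htri
    rwa [hnorm_add, hsum, hprod, ← ofReal_mul, hnorm_mul] at this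
  have hc : (c : ℂ) ≠ 0 := by exact_mod_cast (show 0 < c by positivity).ne'
  have hφ : exp (φ * I) = -exp (2 * θ * I) := by
    rw [hE2]
    apply mul_left_cancel₀ (pow_ne_zero 2 hc)
    apply mul_left_cancel₀ (ofReal_ne_zero.2 hlam.ne')
    linear_combination -hprod_sq
  refine ⟨hφ, fun z ↦ ?_⟩
  have hp' : (p : ℂ) ≠ 0 := ofReal_ne_zero.2 hp.ne'
  rw [hQ, hφ, hE2, ofReal_div]
  push_cast
  field_simp
  ring
end
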